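/- arXiv:0804.0121 — 5 statements merged into one kernel-verified Lean document; each statement's English description precedes it below -/
import Mathlib

section
/- Let C be a densely defined, positive self-adjoint operator on a separable complex Hilbert space h, let G be a densely defined closable linear operator in h with Dom(C) ⊆ Dom(G), and let (L_k)_{k ∈ ℕ} be linear operators in h with Dom(G) ⊆ Dom(L_k) for every k, such that for every x ∈ Dom(G) the series Σ_{k=1}^∞ ‖L_k x‖² converges and 2 Re⟨x, Gx⟩ + Σ_{k=1}^∞ ‖L_k x‖² = 0. Then there exists a constant K ≥ 0 such that Σ_{k=1}^∞ ‖L_k x‖² ≤ K (‖x‖² + ‖Cx‖²) for every x ∈ Dom(C). -/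
/-!
A self-adjoint `C` is closed, so `Dom(C)` with the graph norm, modelled here by the graph of `C`,
is a Banach space. Because `G` is closable, `G` restricted to it has closed graph, so by the
closed graph theorem `‖G x‖ ≤ M (‖x‖ + ‖C x‖)`. The conservativity relation then gives
`Σₖ ‖Lₖ x‖² = -2 Re⟨x, G x⟩ ≤ 2 ‖x‖ ‖G x‖ ≤ 3 M (‖x‖² + ‖C x‖²)`.
-/

open Filter Topology

namespace LinearPMap

variable {𝕜 E F F' : Type*} [NontriviallyNormedField 𝕜]
  [NormedAddCommGroup E] [NormedSpace 𝕜 E] [NormedAddCommGroup F] [NormedSpace 𝕜 F]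
  [NormedAddCommGroup F'] [NormedSpace 𝕜 F']

def compGraphFst (C : E →ₗ.[𝕜] F) (G : E →ₗ.[𝕜] F') (h : C.domain ≤ G.domain) :
    C.graph →ₗ[𝕜] F' :=
  G.toFun ∘ₗ Submodule.inclusion h ∘ₗ
    (LinearMap.fst 𝕜 E F).restrict fun _ hp => mem_domain_of_mem_graph hp

theorem IsClosable.continuous_compGraphFst [CompleteSpace E] [CompleteSpace F]
    [CompleteSpace F'] {C : E →ₗ.[𝕜] F} {G : E →ₗ.[𝕜] F'} (hC : C.IsClosed)
    (hG : G.IsClosable) (h : C.domain ≤ G.domain) : Continuous (compGraphFst C G h) := by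
  have : CompleteSpace C.graph := hC.completeSpace_coe
  refine (compGraphFst C G h).continuous_of_seq_closed_graph fun u p y hu hGu => ?_
  have hfst : Tendsto (fun n => (u n : E × F).1) atTop (𝓝 (p : E × F).1) :=
    ((continuous_fst.comp continuous_subtype_val).tendsto p).comp hu
  have hy : ((p : E × F).1, y) ∈ G.closure.graph := by
    rw [← hG.graph_closure_eq_closure_graph, ← SetLike.mem_coe,
      Submodule.topologicalClosure_coe]
    exact mem_closure_of_tendsto (hfst.prodMk_nhds hGu) (Eventually.of_forall fun n =>
      G.mem_graph ⟨_, h (mem_domain_of_mem_graph (u n).2)⟩)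
  exact G.closure.mem_graph_snd_inj hy
    (le_graph_of_le G.le_closure (G.mem_graph ⟨_, h (mem_domain_of_mem_graph p.2)⟩)) rfl

theorem IsClosed.exists_norm_le_of_isClosable [CompleteSpace E] [CompleteSpace F]
    [CompleteSpace F'] {C : E →ₗ.[𝕜] F} {G : E →ₗ.[𝕜] F'} (hC : C.IsClosed)
    (hG : G.IsClosable) (h : C.domain ≤ G.domain) :
    ∃ M, 0 ≤ M ∧ ∀ x : C.domain, ‖G ⟨x, h x.2⟩‖ ≤ M * (‖(x : E)‖ + ‖C x‖) := by
  let g : C.graph →L[𝕜] F' := ⟨compGraphFst C G h, hG.continuous_compGraphFst hC h⟩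
  refine ⟨‖g‖, g.opNorm_nonneg, fun x => ?_⟩
  calc ‖G ⟨x, h x.2⟩‖ ≤ ‖g‖ * max ‖(x : E)‖ ‖C x‖ := g.le_opNorm ⟨_, C.mem_graph x⟩
    _ ≤ ‖g‖ * (‖(x : E)‖ + ‖C x‖) := by
      gcongr
      exact max_le_add_of_nonneg (norm_nonneg _) (norm_nonneg _)

end LinearPMap

theorem two_mul_mul_le_of_le_mul_add {a b g M : ℝ} (ha : 0 ≤ a) (hM : 0 ≤ M)
    (hg : g ≤ M * (a + b)) : 2 * a * g ≤ 3 * M * (a ^ 2 + b ^ 2) := by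
  nlinarith [mul_le_mul_of_nonneg_left hg ha, mul_nonneg hM (sq_nonneg (a - b)),
    mul_nonneg hM (sq_nonneg b)]

theorem stmt4_general {H : Type*} [NormedAddCommGroup H] [InnerProductSpace ℂ H]
    [CompleteSpace H]
    (C : H →ₗ.[ℂ] H)
    (hCsa : IsSelfAdjoint C)
    (G : H →ₗ.[ℂ] H)
    (hGclos : G.IsClosable)
    (hsub : C.domain ≤ G.domain)
    (L : ℕ → (H →ₗ.[ℂ] H))
    (hLsub : ∀ k, G.domain ≤ (L k).domain)
    (hcons : ∀ x : G.domain,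
      2 * (inner ℂ ((x : H)) (G x) : ℂ).re + ∑' k : ℕ, ‖L k ⟨(x : H), hLsub k x.2⟩‖ ^ 2 = 0) :
    ∃ K : ℝ, 0 ≤ K ∧ ∀ x : C.domain,
      ∑' k : ℕ, ‖L k ⟨(x : H), hLsub k (hsub x.2)⟩‖ ^ 2
        ≤ K * (‖(x : H)‖ ^ 2 + ‖C x‖ ^ 2) := by
  obtain ⟨M, hM, hbound⟩ := hCsa.isClosed.exists_norm_le_of_isClosable hGclos hsub
  refine ⟨3 * M, by positivity, fun x => ?_⟩
  set y : G.domain := ⟨x, hsub x.2⟩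
  calc ∑' k : ℕ, ‖L k ⟨(x : H), hLsub k (hsub x.2)⟩‖ ^ 2
      = 2 * (inner ℂ (-(x : H)) (G y) : ℂ).re := by
        rw [inner_neg_left, Complex.neg_re]; linarith [hcons y]
    _ ≤ 2 * ‖(x : H)‖ * ‖G y‖ := by
        rw [mul_assoc, ← norm_neg (x : H)]
        gcongr
        exact re_inner_le_norm (𝕜 := ℂ) _ _
    _ ≤ 3 * M * (‖(x : H)‖ ^ 2 + ‖C x‖ ^ 2) :=
        two_mul_mul_le_of_le_mul_add (norm_nonneg _) hM (hbound x)

/-- second claim of Remark 2. Under the conservativity relation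
`2 Re⟨x, Gx⟩ + Σₖ ‖Lₖ x‖² = 0` on `Dom(G)`, with `C` densely defined positive self-adjoint,
`G` densely defined and closable, `Dom(C) ⊆ Dom(G)` and `Dom(G) ⊆ Dom(Lₖ)`, there is a
constant `K ≥ 0` with `Σₖ ‖Lₖ x‖² ≤ K (‖x‖² + ‖Cx‖²)` for every `x ∈ Dom(C)`. -/
theorem stmt4 {H : Type*} [NormedAddCommGroup H] [InnerProductSpace ℂ H]
    [CompleteSpace H] [TopologicalSpace.SeparableSpace H]
    (C : H →ₗ.[ℂ] H)
    (hCdense : Dense (C.domain : Set H))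
    (hCsa : IsSelfAdjoint C)
    (hCpos : ∀ x : C.domain, 0 ≤ (inner ℂ ((x : H)) (C x) : ℂ).re ∧
      (inner ℂ ((x : H)) (C x) : ℂ).im = 0)
    (G : H →ₗ.[ℂ] H)
    (hGdense : Dense (G.domain : Set H))
    (hGclos : G.IsClosable)
    (hsub : C.domain ≤ G.domain)
    (L : ℕ → (H →ₗ.[ℂ] H))
    (hLsub : ∀ k, G.domain ≤ (L k).domain)
    (hsummable : ∀ x : G.domain, Summable fun k : ℕ => ‖L k ⟨(x : H), hLsub k x.2⟩‖ ^ 2)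
    (hcons : ∀ x : G.domain,
      2 * (inner ℂ ((x : H)) (G x) : ℂ).re + ∑' k : ℕ, ‖L k ⟨(x : H), hLsub k x.2⟩‖ ^ 2 = 0) :
    ∃ K : ℝ, 0 ≤ K ∧ ∀ x : C.domain,
      ∑' k : ℕ, ‖L k ⟨(x : H), hLsub k (hsub x.2)⟩‖ ^ 2
        ≤ K * (‖(x : H)‖ ^ 2 + ‖C x‖ ^ 2) :=
  stmt4_general C hCsa G hGclos hsub L hLsub hcons
end

section
/- Let h be a separable complex Hilbert space with orthonormal basis (e_n)_{n ∈ ℤ₊}, and for each n ∈ ℤ₊ let P_n denote the orthogonal projection of h onto the linear span h_n of e_0, …, e_n. Let C be a densely defined, positive self-adjoint operator on h such that e_n ∈ Dom(C) for every n and sup_{n ∈ ℤ₊} ‖C P_n x‖ ≤ ‖Cx‖ for every x ∈ Dom(C). Then for every x ∈ Dom(C), C P_n x converges to C x in h as n → ∞. -/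
/-!
The vectors `C Pₙ x` are bounded by `‖C x‖`, and symmetry of `C` gives
`⟪w, C Pₙ x⟫ = ⟪C w, Pₙ x⟫ → ⟪C w, x⟫ = ⟪w, C x⟫` for `w` in the dense domain; by boundedness
(equicontinuity) this extends to all `w`, so `C Pₙ x → C x` weakly. A weakly convergent sequence
whose norms stay below the norm of the limit converges in norm, because
`‖C Pₙ x - C x‖² ≤ 2 ‖C x‖² - 2 Re ⟪C x, C Pₙ x⟫ → 0`.
-/

open Filter Topology

/-- The orthogonal projection `Pₙ` of `x` onto the span of `e 0, …, e n` (for an orthonormal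
family `e`), viewed as an element of the domain of the operator `C`, assuming each `e n`
belongs to `Dom(C)`. -/
noncomputable def projDom {H : Type*} [NormedAddCommGroup H] [InnerProductSpace ℂ H]
    (C : H →ₗ.[ℂ] H) (e : ℕ → H) (he : ∀ n, e n ∈ C.domain) (n : ℕ) (x : H) : C.domain :=
  ⟨∑ i ∈ Finset.range (n + 1), (inner ℂ (e i) x : ℂ) • e i,
    Submodule.sum_mem _ fun i _ => Submodule.smul_mem _ _ (he i)⟩

section InnerProductSpace

variable {ι 𝕜 E : Type*} [RCLike 𝕜] [NormedAddCommGroup E] [InnerProductSpace 𝕜 E]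
  {l : Filter ι} {F : ι → E} {L : E}

theorem equicontinuous_inner_left_of_norm_le {M : ℝ} (hF : ∀ i, ‖F i‖ ≤ M) :
    Equicontinuous fun i (v : E) => inner 𝕜 v (F i) := by
  refine Metric.equicontinuous_of_continuity_modulus (fun t => t * M) ?_ _ fun x y i => ?_
  · exact (continuous_mul_const M).tendsto' 0 0 (zero_mul M)
  · calc dist (inner 𝕜 x (F i)) (inner 𝕜 y (F i)) = ‖inner 𝕜 (x - y) (F i)‖ := by
          rw [dist_eq_norm, inner_sub_left]
      _ ≤ ‖x - y‖ * ‖F i‖ := norm_inner_le_norm _ _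
      _ ≤ dist x y * M := by rw [dist_eq_norm]; gcongr; exact hF i

theorem tendsto_inner_left_of_dense {M : ℝ} {S : Set E} (hS : Dense S) (hF : ∀ i, ‖F i‖ ≤ M)
    (h : ∀ w ∈ S, Tendsto (fun i => inner 𝕜 w (F i)) l (𝓝 (inner 𝕜 w L))) (v : E) :
    Tendsto (fun i => inner 𝕜 v (F i)) l (𝓝 (inner 𝕜 v L)) := by
  have hclosed : IsClosed {v : E | Tendsto (fun i => inner 𝕜 v (F i)) l (𝓝 (inner 𝕜 v L))} :=
    (equicontinuous_inner_left_of_norm_le hF).isClosed_setOfPred_tendsto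
      (continuous_id.inner continuous_const)
  exact hclosed.closure_subset_iff.2 h (hS.closure_eq ▸ Set.mem_univ v)

theorem tendsto_of_norm_le_of_tendsto_inner (hF : ∀ i, ‖F i‖ ≤ ‖L‖)
    (h : Tendsto (fun i => inner 𝕜 L (F i)) l (𝓝 (inner 𝕜 L L))) : Tendsto F l (𝓝 L) := by
  have hsq : ∀ i, ‖F i - L‖ ^ 2 ≤ 2 * ‖L‖ ^ 2 - 2 * RCLike.re (inner 𝕜 L (F i)) := by
    intro i
    have hFL : ‖F i‖ ^ 2 ≤ ‖L‖ ^ 2 := pow_le_pow_left₀ (norm_nonneg _) (hF i) 2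
    rw [norm_sub_sq (𝕜 := 𝕜), inner_re_symm (𝕜 := 𝕜)]
    linarith
  have hre : Tendsto (fun i => RCLike.re (inner 𝕜 L (F i))) l (𝓝 (‖L‖ ^ 2)) := by
    simpa [Function.comp_def, inner_self_eq_norm_sq (𝕜 := 𝕜)] using
      (RCLike.continuous_re.tendsto _).comp h
  have hbound : Tendsto (fun i => 2 * ‖L‖ ^ 2 - 2 * RCLike.re (inner 𝕜 L (F i))) l (𝓝 0) := by
    rw [← sub_self (2 * ‖L‖ ^ 2)]
    exact tendsto_const_nhds.sub (hre.const_mul 2)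
  have hdist_sq := squeeze_zero (fun i => sq_nonneg _) hsq hbound
  rw [tendsto_iff_norm_sub_tendsto_zero]
  simpa [Function.comp_def, Real.sqrt_sq (norm_nonneg _)] using
    (Real.continuous_sqrt.tendsto 0).comp hdist_sq

theorem IsSelfAdjoint.tendsto_apply_of_norm_le [CompleteSpace E] {A : E →ₗ.[𝕜] E}
    (hA : IsSelfAdjoint A) {u : ι → A.domain} {x : A.domain}
    (hu : Tendsto (fun i => (u i : E)) l (𝓝 x)) (hbound : ∀ i, ‖A (u i)‖ ≤ ‖A x‖) :
    Tendsto (fun i => A (u i)) l (𝓝 (A x)) := by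
  have hsymm : A.IsFormalAdjoint A := by
    have := LinearPMap.adjoint_isFormalAdjoint hA.dense_domain
    rwa [LinearPMap.isSelfAdjoint_def.1 hA] at this
  have hweak : ∀ w : A.domain, Tendsto (fun i => inner 𝕜 (w : E) (A (u i))) l
      (𝓝 (inner 𝕜 (w : E) (A x))) := by
    intro w
    simp_rw [← hsymm w]
    exact tendsto_const_nhds.inner hu
  refine tendsto_of_norm_le_of_tendsto_inner (𝕜 := 𝕜) hbound ?_
  exact tendsto_inner_left_of_dense hA.dense_domain hbound (fun w hw => hweak ⟨w, hw⟩) _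

end InnerProductSpace

theorem stmt5_general {H : Type*} [NormedAddCommGroup H] [InnerProductSpace ℂ H]
    [CompleteSpace H]
    (e : HilbertBasis ℕ ℂ H)
    (C : H →ₗ.[ℂ] H)
    (hsa : IsSelfAdjoint C)
    (he : ∀ n, (e n : H) ∈ C.domain)
    (hbound : ∀ (x : H) (hx : x ∈ C.domain) (n : ℕ),
      ‖C (projDom C (fun n => e n) he n x)‖ ≤ ‖C ⟨x, hx⟩‖) :
    ∀ (x : H) (hx : x ∈ C.domain),
      Tendsto (fun n => C (projDom C (fun n => e n) he n x)) atTop (nhds (C ⟨x, hx⟩)) := by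
  intro x hx
  refine hsa.tendsto_apply_of_norm_le ?_ (hbound x hx)
  have hpartial := (e.hasSum_repr x).tendsto_sum_nat.comp (tendsto_add_atTop_nat 1)
  simpa [projDom, Function.comp_def, HilbertBasis.repr_apply_apply] using hpartial

/-- first claim of Remark 3. If `C` is densely defined, positive and
self-adjoint, each basis vector `eₙ` lies in `Dom(C)` (H1.2) and `supₙ ‖C Pₙ x‖ ≤ ‖Cx‖`
for all `x ∈ Dom(C)` (H1.4), then `C Pₙ x → C x` for every `x ∈ Dom(C)`. -/
theorem stmt5 {H : Type*} [NormedAddCommGroup H] [InnerProductSpace ℂ H]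
    [CompleteSpace H] [TopologicalSpace.SeparableSpace H]
    (e : HilbertBasis ℕ ℂ H)
    (C : H →ₗ.[ℂ] H)
    (hdense : Dense (C.domain : Set H))
    (hsa : IsSelfAdjoint C)
    (hpos : ∀ x : C.domain, 0 ≤ (inner ℂ ((x : H)) (C x) : ℂ).re ∧
      (inner ℂ ((x : H)) (C x) : ℂ).im = 0)
    (he : ∀ n, (e n : H) ∈ C.domain)
    (hbound : ∀ (x : H) (hx : x ∈ C.domain) (n : ℕ),
      ‖C (projDom C (fun n => e n) he n x)‖ ≤ ‖C ⟨x, hx⟩‖) :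
    ∀ (x : H) (hx : x ∈ C.domain),
      Tendsto (fun n => C (projDom C (fun n => e n) he n x)) atTop (nhds (C ⟨x, hx⟩)) :=
  stmt5_general e C hsa he hbound
end

section
/- Let h be a separable complex Hilbert space with orthonormal basis (e_n)_{n ∈ ℤ₊}, and for each n ∈ ℤ₊ let P_n denote the orthogonal projection of h onto the linear span h_n of e_0, …, e_n. Let C be a densely defined, positive self-adjoint operator on h such that e_n ∈ Dom(C) for every n and sup_{n ∈ ℤ₊} ‖C P_n x‖ ≤ ‖Cx‖ for every x ∈ Dom(C). Then Dom(C) = {x ∈ h : the sequence (C P_n x)_{n ∈ ℤ₊} converges in h}. -/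
/-!
Since `C` is self-adjoint it is closed, and `Pₙ x → x`; so if `C Pₙ x` converges, its limit
forces `x ∈ Dom(C)`. Conversely, for `x ∈ Dom(C)` symmetry gives `⟪z, C Pₙ x⟫ = ⟪C z, Pₙ x⟫ →
⟪z, C x⟫` for `z ∈ Dom(C)`; the bound `‖C Pₙ x‖ ≤ ‖C x‖` extends this weak convergence from the
dense domain to the whole space, and weak convergence together with `limsup ‖C Pₙ x‖ ≤ ‖C x‖` is
norm convergence.
-/

open Filter

open Topology NNReal

section InnerProductSpace

variable {𝕜 E ι : Type*} [RCLike 𝕜] [NormedAddCommGroup E] [InnerProductSpace 𝕜 E]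
  {l : Filter ι}

local notation "⟪" x ", " y "⟫" => inner 𝕜 x y

theorem tendsto_inner_of_dense {u : ι → E} {y : E} {M : ℝ≥0} (hu : ∀ i, ‖u i‖ ≤ M)
    {s : Set E} (hs : Dense s) (h : ∀ z ∈ s, Tendsto (fun i => ⟪z, u i⟫) l (𝓝 ⟪z, y⟫))
    (w : E) : Tendsto (fun i => ⟪w, u i⟫) l (𝓝 ⟪w, y⟫) := by
  have hlip : ∀ i, LipschitzWith M fun z => ⟪z, u i⟫ := fun i =>
    LipschitzWith.of_dist_le_mul fun z₁ z₂ => by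
      rw [dist_eq_norm, dist_eq_norm, ← inner_sub_left, mul_comm]
      exact (norm_inner_le_norm _ _).trans (by gcongr; exact hu i)
  have hclosed : IsClosed {w : E | Tendsto (fun i => ⟪w, u i⟫) l (𝓝 ⟪w, y⟫)} :=
    (LipschitzWith.uniformEquicontinuous _ M hlip).equicontinuous.isClosed_setOfPred_tendsto
      (continuous_id.inner continuous_const)
  exact hclosed.closure_subset_iff.mpr h (hs w)

theorem tendsto_of_tendsto_inner_of_norm_le {u : ι → E} {y : E} (hu : ∀ i, ‖u i‖ ≤ ‖y‖)
    (h : Tendsto (fun i => ⟪y, u i⟫) l (𝓝 ⟪y, y⟫)) : Tendsto u l (𝓝 y) := by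
  have hle : ∀ i, ‖u i - y‖ ^ 2 ≤ 2 * RCLike.re (⟪y, y⟫ - ⟪y, u i⟫) := fun i => by
    have hsq : ‖u i‖ ^ 2 ≤ ‖y‖ ^ 2 := by gcongr; exact hu i
    rw [norm_sub_sq (𝕜 := 𝕜), map_sub, inner_re_symm (𝕜 := 𝕜), inner_self_eq_norm_sq (𝕜 := 𝕜)]
    linarith
  have hlim : Tendsto (fun i => 2 * RCLike.re (⟪y, y⟫ - ⟪y, u i⟫)) l (𝓝 0) := by
    simpa using ((RCLike.continuous_re.tendsto _).comp
      ((tendsto_const_nhds (x := ⟪y, y⟫)).sub h)).const_mul (2 : ℝ)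
  have hsq : Tendsto (fun i => ‖u i - y‖ ^ 2) l (𝓝 0) :=
    squeeze_zero (fun _ => sq_nonneg _) hle hlim
  rw [tendsto_iff_norm_sub_tendsto_zero]
  simpa [Real.sqrt_sq (norm_nonneg _)] using hsq.sqrt

theorem HilbertBasis.tendsto_sum_range_inner_smul (e : HilbertBasis ℕ 𝕜 E) (x : E) :
    Tendsto (fun n => ∑ i ∈ Finset.range (n + 1), ⟪(e i : E), x⟫ • (e i : E)) atTop (𝓝 x) := by
  have h : HasSum (fun i => ⟪(e i : E), x⟫ • (e i : E)) x := by
    simpa [e.repr_apply_apply] using e.hasSum_repr x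
  exact h.tendsto_sum_nat.comp (tendsto_add_atTop_nat 1)

end InnerProductSpace

namespace LinearPMap

theorem IsClosed.mem_domain_of_tendsto {R E F ι : Type*} [CommRing R] [AddCommGroup E]
    [Module R E] [AddCommGroup F] [Module R F] [TopologicalSpace E] [TopologicalSpace F]
    {f : E →ₗ.[R] F} (hf : f.IsClosed) {l : Filter ι} [l.NeBot] {v : ι → f.domain} {x : E} {y : F}
    (hv : Tendsto (fun i => (v i : E)) l (𝓝 x)) (hfv : Tendsto (fun i => f (v i)) l (𝓝 y)) :
    x ∈ f.domain :=
  mem_domain_of_mem_graph <|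
    hf.mem_of_tendsto (hv.prodMk_nhds hfv) (Eventually.of_forall fun i => f.mem_graph (v i))

variable {𝕜 E ι : Type*} [RCLike 𝕜] [NormedAddCommGroup E] [InnerProductSpace 𝕜 E]
  {l : Filter ι}

local notation "⟪" x ", " y "⟫" => inner 𝕜 x y

theorem IsFormalAdjoint.tendsto_of_norm_le {T : E →ₗ.[𝕜] E} (hT : T.IsFormalAdjoint T)
    (hdense : Dense (T.domain : Set E)) {v : ι → T.domain} {x : T.domain}
    (hv : Tendsto (fun i => (v i : E)) l (𝓝 x)) (hle : ∀ i, ‖T (v i)‖ ≤ ‖T x‖) :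
    Tendsto (fun i => T (v i)) l (𝓝 (T x)) := by
  have hweak : ∀ z ∈ (T.domain : Set E), Tendsto (fun i => ⟪z, T (v i)⟫) l (𝓝 ⟪z, T x⟫) := by
    intro z hz
    simpa only [hT ⟨z, hz⟩] using (tendsto_const_nhds (x := T ⟨z, hz⟩)).inner (𝕜 := 𝕜) hv
  exact tendsto_of_tendsto_inner_of_norm_le hle
    (tendsto_inner_of_dense (M := ‖T x‖₊) hle hdense hweak _)

theorem _root_.IsSelfAdjoint.isFormalAdjoint [CompleteSpace E] {A : E →ₗ.[𝕜] E}
    (hA : IsSelfAdjoint A) : A.IsFormalAdjoint A := by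
  simpa only [isSelfAdjoint_def.mp hA] using adjoint_isFormalAdjoint hA.dense_domain (T := A)

end LinearPMap

theorem stmt6_general {H : Type*} [NormedAddCommGroup H] [InnerProductSpace ℂ H]
    [CompleteSpace H]
    (e : HilbertBasis ℕ ℂ H)
    (C : H →ₗ.[ℂ] H)
    (hsa : IsSelfAdjoint C)
    (he : ∀ n, (e n : H) ∈ C.domain)
    (hbound : ∀ (x : H) (hx : x ∈ C.domain) (n : ℕ),
      ‖C (projDom C (fun n => e n) he n x)‖ ≤ ‖C ⟨x, hx⟩‖) :
    ∀ x : H, x ∈ C.domain ↔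
      ∃ y : H, Tendsto (fun n => C (projDom C (fun n => e n) he n x)) atTop (nhds y) := by
  intro x
  have hP : Tendsto (fun n => (projDom C (fun n => e n) he n x : H)) atTop (𝓝 x) :=
    e.tendsto_sum_range_inner_smul x
  constructor
  · intro hx
    exact ⟨_, hsa.isFormalAdjoint.tendsto_of_norm_le hsa.dense_domain (x := ⟨x, hx⟩) hP
      (hbound x hx)⟩
  · rintro ⟨y, hy⟩
    exact hsa.isClosed.mem_domain_of_tendsto hP hy

/-- second claim of Remark 3. If `C` is densely defined, positive and
self-adjoint, each basis vector `eₙ` lies in `Dom(C)` (H1.2) and `supₙ ‖C Pₙ x‖ ≤ ‖Cx‖`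
for all `x ∈ Dom(C)` (H1.4), then `Dom(C)` consists exactly of those `x ∈ H` for which
the sequence `(C Pₙ x)ₙ` converges in `H`. -/
theorem stmt6 {H : Type*} [NormedAddCommGroup H] [InnerProductSpace ℂ H]
    [CompleteSpace H] [TopologicalSpace.SeparableSpace H]
    (e : HilbertBasis ℕ ℂ H)
    (C : H →ₗ.[ℂ] H)
    (hdense : Dense (C.domain : Set H))
    (hsa : IsSelfAdjoint C)
    (hpos : ∀ x : C.domain, 0 ≤ (inner ℂ ((x : H)) (C x) : ℂ).re ∧
      (inner ℂ ((x : H)) (C x) : ℂ).im = 0)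
    (he : ∀ n, (e n : H) ∈ C.domain)
    (hbound : ∀ (x : H) (hx : x ∈ C.domain) (n : ℕ),
      ‖C (projDom C (fun n => e n) he n x)‖ ≤ ‖C ⟨x, hx⟩‖) :
    ∀ x : H, x ∈ C.domain ↔
      ∃ y : H, Tendsto (fun n => C (projDom C (fun n => e n) he n x)) atTop (nhds y) :=
  stmt6_general e C hsa he hbound
end

section
/- Fix a natural number p ≥ 4, real numbers β₁, β₂, β₃ and complex numbers α₁, …, α₆ with |α₄| > |α₅|. Then for every α ∈ (0, 4p(|α₄|² − |α₅|²)) there exist β ∈ [0, ∞) and N₀ ∈ ℤ₊ such that for every n ≥ N₀ and every x ∈ h_n: 2 Re⟨N^p x, N^p P_n G x⟩ + Σ_{k=1}^{6} ‖N^p P_n L_k x‖² ≤ −α ‖N^p x‖² + β (1 + ‖x‖²). -/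
/-!
For `x ∈ h_n` the projection `P_n` is invisible in the `G` term and only discards nonnegative
terms in the `L_k` terms. After the index shifts produced by `a` and `a†`, everything except the
`β₁` cross term is diagonal in `(e_k)`; the cross term telescopes to
`Σ_k (k^{2p} - (k-1)^{2p}) Re(conj x_k (a†x)_k)` and AM-GM bounds it by diagonal terms of order
`k^{2p}`. The `N²` and `N⁴` parts cancel exactly, so the coefficient of `|x_k|²` is
`-4p(|α₄|² - |α₅|²) k^{2p+1} + O(k^{2p})`. It lies below `-α k^{2p}` for all large `k`, and `β`
absorbs the finitely many remaining `k`.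
-/

noncomputable section

namespace QOsc

/-- The annihilation operator `a` in coordinates: `a e_j = √j e_{j-1}`. -/
def ann (f : ℕ → ℂ) : ℕ → ℂ := fun j => (Real.sqrt (j + 1) : ℂ) * f (j + 1)

/-- The creation operator `a†` in coordinates: `a† e_j = √(j+1) e_{j+1}`. -/
def cre (f : ℕ → ℂ) : ℕ → ℂ := fun j => if j = 0 then 0 else (Real.sqrt j : ℂ) * f (j - 1)

/-- The number operator `N = a† a`. -/
def num (f : ℕ → ℂ) : ℕ → ℂ := fun j => (j : ℂ) * f j

/-- The power `N^p` of the number operator. -/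
def numPow (p : ℕ) (f : ℕ → ℂ) : ℕ → ℂ := fun j => (j : ℂ) ^ p * f j

/-- The orthogonal projection `P_n` onto the span `h_n` of `e_0, …, e_n`. -/
def proj (n : ℕ) (f : ℕ → ℂ) : ℕ → ℂ := fun j => if j ≤ n then f j else 0

/-- The inner product `⟨f, g⟩ = Σ_j conj (f_j) g_j` (linear in the second variable). -/
def innerSeq (f g : ℕ → ℂ) : ℂ := ∑' j : ℕ, (starRingEnd ℂ) (f j) * g j

/-- The squared norm `‖f‖² = Σ_j |f_j|²`. -/
def normSq (f : ℕ → ℂ) : ℝ := ∑' j : ℕ, ‖f j‖ ^ 2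

/-- The Hamiltonian `H = iβ₁(a† − a) + β₂ N + β₃ (a†)² a²`. -/
def Ham (b1 b2 b3 : ℝ) (f : ℕ → ℂ) : ℕ → ℂ :=
  (Complex.I * (b1 : ℂ)) • (cre f - ann f) + (b2 : ℂ) • num f
    + (b3 : ℂ) • cre (cre (ann (ann f)))

/-- The effective Hamiltonian
`G = −iH − ½(|α₁|² a† a + |α₂|² a a† + |α₃|² N² + |α₄|² (a†)² a² + |α₅|² a² (a†)² + |α₆|² N⁴)`. -/
def Gop (b1 b2 b3 : ℝ) (a1 a2 a3 a4 a5 a6 : ℂ) (f : ℕ → ℂ) : ℕ → ℂ :=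
  (-Complex.I) • Ham b1 b2 b3 f
    - (1 / 2 : ℂ) •
      (((‖a1‖ ^ 2 : ℝ) : ℂ) • cre (ann f) + ((‖a2‖ ^ 2 : ℝ) : ℂ) • ann (cre f)
        + ((‖a3‖ ^ 2 : ℝ) : ℂ) • num (num f)
        + ((‖a4‖ ^ 2 : ℝ) : ℂ) • cre (cre (ann (ann f)))
        + ((‖a5‖ ^ 2 : ℝ) : ℂ) • ann (ann (cre (cre f)))
        + ((‖a6‖ ^ 2 : ℝ) : ℂ) • num (num (num (num f))))

end QOsc

open Finset Filter

lemma sum_range_shift_eq {M : Type*} [AddCommMonoid M] (f : ℕ → M) {d m : ℕ}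
    (h_lt : ∀ k < d, f k = 0) (h_ge : ∀ k, m ≤ k → f k = 0) :
    ∑ k ∈ range m, f (k + d) = ∑ k ∈ range m, f k := by
  have h₁ := sum_range_add f d m
  have h₂ := sum_range_add f m d
  rw [sum_eq_zero fun k hk => h_lt k (mem_range.1 hk), zero_add] at h₁
  rw [sum_eq_zero fun k _ => h_ge _ (Nat.le_add_right m k), add_zero, add_comm m d, h₁] at h₂
  simpa only [add_comm d] using h₂

lemma pow_sub_pow_le_of_le {α : Type*} [CommRing α] [LinearOrder α] [IsOrderedRing α]
    {a b : α} (hb : 0 ≤ b) (hab : b ≤ a) (n : ℕ) :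
    a ^ n - b ^ n ≤ (a - b) * n * a ^ (n - 1) := by
  have h := abs_pow_sub_pow_le a b n
  rwa [abs_of_nonneg (sub_nonneg.2 hab), abs_of_nonneg (hb.trans hab), abs_of_nonneg hb,
    max_eq_left hab, abs_of_nonneg (sub_nonneg.2 (pow_le_pow_left₀ hb hab n))] at h

lemma ofReal_sqrt_mul_ofReal_sqrt {t : ℝ} (ht : 0 ≤ t) (z : ℂ) :
    (Real.sqrt t : ℂ) * ((Real.sqrt t : ℂ) * z) = t * z := by
  rw [← mul_assoc, ← Complex.ofReal_mul, Real.mul_self_sqrt ht]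

section RealBounds

variable {t : ℝ} {q : ℕ}

lemma mul_add_one_pow_sub_pow_le (ht : 0 ≤ t) (hq : q ≠ 0) :
    (t + 1) * ((t + 1) ^ q - t ^ q) ≤ q * (t + 1) ^ q := by
  have h := pow_sub_pow_le_of_le ht (le_add_of_nonneg_right zero_le_one) q
  rw [add_sub_cancel_left, one_mul] at h
  calc (t + 1) * ((t + 1) ^ q - t ^ q) ≤ (t + 1) * (q * (t + 1) ^ (q - 1)) := by gcongr
    _ = q * (t + 1) ^ q := by rw [mul_left_comm, mul_comm (t + 1), pow_sub_one_mul hq]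

lemma mul_add_two_pow_sub_pow_le (ht : 0 ≤ t) (hq : q ≠ 0) :
    (t + 1) * (t + 2) * ((t + 2) ^ q - t ^ q) ≤ 2 * q * (t + 2) ^ (q + 1) := by
  have h := pow_sub_pow_le_of_le ht (le_add_of_nonneg_right zero_le_two) q
  rw [add_sub_cancel_left] at h
  calc (t + 1) * (t + 2) * ((t + 2) ^ q - t ^ q)
      ≤ (t + 2) ^ 2 * (2 * q * (t + 2) ^ (q - 1)) := by
        gcongr
        · exact sub_nonneg.2 (pow_le_pow_left₀ ht (by linarith) q)
        · nlinarith
    _ = 2 * q * (t + 2) ^ (q + 1) := by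
        rw [mul_left_comm, ← pow_add]; congr 2; omega

lemma mul_sub_two_pow_sub_pow_le (ht : 2 ≤ t) (hq : q ≠ 0) :
    t * (t - 1) * ((t - 2) ^ q - t ^ q)
      ≤ -(2 * q * ((t + 2) ^ (q + 1) - 4 * (q + 1) * (t + 2) ^ q)) := by
  have hlow : (t - 2) ^ q + q * (t - 2) ^ (q - 1) * 2 ≤ t ^ q := by
    simpa using pow_add_mul_le_add_pow (a := t - 2) (b := 2) (by linarith) (by linarith) q
  have hshift : (t + 2) ^ (q + 1) + (q + 1 : ℕ) * (t + 2) ^ q * (-4) ≤ (t - 2) ^ (q + 1) := by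
    have := pow_add_mul_le_add_pow (a := t + 2) (b := -4) (by linarith) (by linarith) (q + 1)
    rwa [Nat.add_sub_cancel, show t + 2 + -4 = t - 2 by ring] at this
  push_cast at hshift
  have hneg : -(2 * q * (t - 2) ^ (q - 1)) ≤ 0 :=
    neg_nonpos.2 (mul_nonneg (by positivity) (pow_nonneg (sub_nonneg.2 ht) _))
  calc t * (t - 1) * ((t - 2) ^ q - t ^ q) ≤ t * (t - 1) * (-(2 * q * (t - 2) ^ (q - 1))) :=
        mul_le_mul_of_nonneg_left (by linarith) (by nlinarith)
    _ ≤ (t - 2) ^ 2 * (-(2 * q * (t - 2) ^ (q - 1))) :=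
        mul_le_mul_of_nonpos_right (by nlinarith) hneg
    _ = -(2 * q * (t - 2) ^ (q + 1)) := by
        rw [mul_neg, mul_left_comm, ← pow_add]; congr 3; omega
    _ ≤ _ := by nlinarith

end RealBounds

namespace QOsc

section Ladder

variable (f : ℕ → ℂ) (j : ℕ)

lemma ann_apply : ann f j = (Real.sqrt (j + 1) : ℂ) * f (j + 1) := rfl

@[simp] lemma cre_apply_zero : cre f 0 = 0 := rfl

lemma cre_apply_succ : cre f (j + 1) = (Real.sqrt (j + 1) : ℂ) * f j := by
  simp [cre]

lemma cre_ann : cre (ann f) j = j * f j := by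
  cases j with
  | zero => simp
  | succ k =>
    rw [cre_apply_succ, ann_apply, ofReal_sqrt_mul_ofReal_sqrt (by positivity)]
    push_cast; ring

lemma ann_cre : ann (cre f) j = (j + 1) * f j := by
  rw [ann_apply, cre_apply_succ, ofReal_sqrt_mul_ofReal_sqrt (by positivity)]
  push_cast; ring

lemma cre_cre_ann_ann : cre (cre (ann (ann f))) j = j * (j - 1) * f j := by
  cases j with
  | zero => simp
  | succ k =>
    rw [cre_apply_succ, cre_ann, ann_apply, mul_left_comm,
      ofReal_sqrt_mul_ofReal_sqrt (by positivity)]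
    push_cast; ring

lemma ann_ann_cre_cre : ann (ann (cre (cre f))) j = (j + 1) * (j + 2) * f j := by
  rw [ann_apply, ann_cre, cre_apply_succ, mul_left_comm,
    ofReal_sqrt_mul_ofReal_sqrt (by positivity)]
  push_cast; ring

lemma norm_ann_sq : ‖ann f j‖ ^ 2 = (j + 1) * ‖f (j + 1)‖ ^ 2 := by
  rw [ann_apply, norm_mul, mul_pow, Complex.norm_real, Real.norm_eq_abs, sq_abs,
    Real.sq_sqrt (by positivity)]

lemma norm_cre_succ_sq : ‖cre f (j + 1)‖ ^ 2 = (j + 1) * ‖f j‖ ^ 2 := by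
  rw [cre_apply_succ, norm_mul, mul_pow, Complex.norm_real, Real.norm_eq_abs, sq_abs,
    Real.sq_sqrt (by positivity)]

end Ladder

section ShiftedSums

variable (φ : ℝ → ℝ) {f : ℕ → ℂ} {m : ℕ}

lemma sum_mul_norm_ann_sq (hf : ∀ j, m ≤ j → f j = 0) :
    ∑ j ∈ range m, φ j * ‖ann f j‖ ^ 2 = ∑ k ∈ range m, φ (k - 1) * k * ‖f k‖ ^ 2 := by
  rw [← sum_range_shift_eq (fun k : ℕ => φ (k - 1) * k * ‖f k‖ ^ 2) (d := 1)
    (fun k hk => by obtain rfl : k = 0 := (by omega); simp) (fun k hk => by simp [hf k hk])]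
  refine sum_congr rfl fun j _ => ?_
  rw [norm_ann_sq]; push_cast; ring_nf

lemma sum_mul_norm_cre_sq (hf : ∀ j, m ≤ j + 1 → f j = 0) :
    ∑ j ∈ range m, φ j * ‖cre f j‖ ^ 2 = ∑ k ∈ range m, φ (k + 1) * (k + 1) * ‖f k‖ ^ 2 := by
  have h_ge (k : ℕ) (hk : m ≤ k) : φ k * ‖cre f k‖ ^ 2 = 0 := by
    cases k with
    | zero => simp
    | succ k => simp [cre_apply_succ, hf k hk]
  rw [← sum_range_shift_eq (fun j : ℕ => φ j * ‖cre f j‖ ^ 2) (d := 1)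
    (fun k hk => by obtain rfl : k = 0 := (by omega); simp) h_ge]
  refine sum_congr rfl fun k _ => ?_
  rw [norm_cre_succ_sq]; push_cast; ring

lemma sum_mul_norm_ann_ann_sq (hf : ∀ j, m ≤ j → f j = 0) :
    ∑ j ∈ range m, φ j * ‖ann (ann f) j‖ ^ 2
      = ∑ k ∈ range m, φ (k - 2) * ((k - 1) * k) * ‖f k‖ ^ 2 := by
  rw [sum_mul_norm_ann_sq φ fun j hj => by simp [ann_apply, hf (j + 1) (by omega)],
    sum_mul_norm_ann_sq (fun t => φ (t - 1) * t) hf]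
  refine sum_congr rfl fun k _ => ?_
  ring_nf

lemma sum_mul_norm_cre_cre_sq (hf : ∀ j, m ≤ j + 2 → f j = 0) :
    ∑ j ∈ range m, φ j * ‖cre (cre f) j‖ ^ 2
      = ∑ k ∈ range m, φ (k + 2) * ((k + 2) * (k + 1)) * ‖f k‖ ^ 2 := by
  have hcre (j : ℕ) (hj : m ≤ j + 1) : cre f j = 0 := by
    cases j with
    | zero => rfl
    | succ j => simp [cre_apply_succ, hf j (by omega)]
  rw [sum_mul_norm_cre_sq φ hcre, sum_mul_norm_cre_sq (fun t => φ (t + 1) * (t + 1))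
    fun j hj => hf j (by omega)]
  refine sum_congr rfl fun k _ => ?_
  ring_nf

end ShiftedSums

section Sequences

variable {m n p : ℕ}

lemma normSq_eq_sum {y : ℕ → ℂ} (hy : ∀ j, m ≤ j → y j = 0) :
    normSq y = ∑ j ∈ range m, ‖y j‖ ^ 2 :=
  tsum_eq_sum fun j hj => by simp [hy j (by simpa using hj)]

lemma innerSeq_eq_sum {y : ℕ → ℂ} (z : ℕ → ℂ) (hy : ∀ j, m ≤ j → y j = 0) :
    innerSeq y z = ∑ j ∈ range m, (starRingEnd ℂ) (y j) * z j :=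
  tsum_eq_sum fun j hj => by simp [hy j (by simpa using hj)]

lemma norm_natCast_pow_mul_sq (j : ℕ) (z : ℂ) :
    ‖(j : ℂ) ^ p * z‖ ^ 2 = (j : ℝ) ^ (2 * p) * ‖z‖ ^ 2 := by
  rw [norm_mul, mul_pow, norm_pow, Complex.norm_natCast, ← pow_mul, mul_comm p]

lemma normSq_numPow_proj_smul_le (hnm : n < m) (c : ℂ) (y : ℕ → ℂ) :
    normSq (numPow p (proj n (c • y)))
      ≤ ‖c‖ ^ 2 * ∑ j ∈ range m, (j : ℝ) ^ (2 * p) * ‖y j‖ ^ 2 := by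
  rw [normSq_eq_sum (m := m) fun j hj => by simp [numPow, proj, show ¬j ≤ n by omega], mul_sum]
  refine sum_le_sum fun j _ => ?_
  rw [numPow, norm_natCast_pow_mul_sq, proj]
  split_ifs
  · rw [Pi.smul_apply, norm_smul, mul_pow]; exact le_of_eq (by ring)
  · rw [norm_zero, zero_pow two_ne_zero, mul_zero]; positivity

lemma re_innerSeq_numPow_proj {x : ℕ → ℂ} (hx : ∀ j, n < j → x j = 0) (hnm : n < m)
    (y : ℕ → ℂ) :
    (innerSeq (numPow p x) (numPow p (proj n y))).re
      = ∑ j ∈ range m, (j : ℝ) ^ (2 * p) * ((starRingEnd ℂ) (x j) * y j).re := by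
  rw [innerSeq_eq_sum (m := m) _ fun j hj => by simp [numPow, hx j (by omega)], Complex.re_sum]
  refine sum_congr rfl fun j _ => ?_
  by_cases hj : j ≤ n
  · simp only [numPow, proj, if_pos hj, map_mul, map_pow, map_natCast]
    rw [show (j : ℂ) ^ p * (starRingEnd ℂ) (x j) * ((j : ℂ) ^ p * y j)
      = ((j ^ (2 * p) : ℝ) : ℂ) * ((starRingEnd ℂ) (x j) * y j) by push_cast; ring,
      Complex.re_ofReal_mul]
  · simp [numPow, hx j (by omega)]

end Sequences

def dampingCoeff (a1 a2 a3 a4 a5 a6 : ℂ) (t : ℝ) : ℝ :=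
  ‖a1‖ ^ 2 * t + ‖a2‖ ^ 2 * (t + 1) + ‖a3‖ ^ 2 * t ^ 2 + ‖a4‖ ^ 2 * (t * (t - 1))
    + ‖a5‖ ^ 2 * ((t + 1) * (t + 2)) + ‖a6‖ ^ 2 * t ^ 4

lemma two_re_conj_mul_Gop (b1 b2 b3 : ℝ) (a1 a2 a3 a4 a5 a6 : ℂ) (x : ℕ → ℂ) (j : ℕ) :
    2 * ((starRingEnd ℂ) (x j) * Gop b1 b2 b3 a1 a2 a3 a4 a5 a6 x j).re
      = -(dampingCoeff a1 a2 a3 a4 a5 a6 j * ‖x j‖ ^ 2)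
        + 2 * b1
          * (((starRingEnd ℂ) (x j) * cre x j).re - ((starRingEnd ℂ) (x j) * ann x j).re) := by
  have hx : ‖x j‖ ^ 2 = (x j).re ^ 2 + (x j).im ^ 2 := by
    rw [Complex.sq_norm, Complex.normSq_apply]; ring
  simp only [Gop, Ham, Pi.add_apply, Pi.sub_apply, Pi.smul_apply, smul_eq_mul, cre_ann, ann_cre,
    cre_cre_ann_ann, ann_ann_cre_cre, num, dampingCoeff, hx]
  simp only [Complex.mul_re, Complex.mul_im, Complex.add_re, Complex.add_im, Complex.sub_re,
    Complex.sub_im, Complex.neg_re, Complex.neg_im, Complex.I_re, Complex.I_im, Complex.ofReal_re,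
    Complex.ofReal_im, Complex.conj_re, Complex.conj_im, Complex.natCast_re, Complex.natCast_im,
    Complex.one_re, Complex.one_im, Complex.re_ofNat, Complex.im_ofNat, Complex.div_ofNat_re,
    Complex.div_ofNat_im]
  ring

section Cross

variable {x : ℕ → ℂ} {m : ℕ}

lemma re_conj_mul_ann_eq (j : ℕ) :
    ((starRingEnd ℂ) (x j) * ann x j).re
      = ((starRingEnd ℂ) (x (j + 1)) * cre x (j + 1)).re := by
  rw [ann_apply, cre_apply_succ, ← Complex.conj_re]
  simp only [map_mul, Complex.conj_conj, Complex.conj_ofReal]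
  ring_nf

lemma sum_pow_mul_re_conj_mul_ann (q : ℕ) (hx : ∀ j, m ≤ j → x j = 0) :
    ∑ j ∈ range m, (j : ℝ) ^ q * ((starRingEnd ℂ) (x j) * ann x j).re
      = ∑ k ∈ range m, ((k : ℝ) - 1) ^ q * ((starRingEnd ℂ) (x k) * cre x k).re := by
  rw [← sum_range_shift_eq
    (fun k : ℕ => ((k : ℝ) - 1) ^ q * ((starRingEnd ℂ) (x k) * cre x k).re) (d := 1)
    (fun k hk => by obtain rfl : k = 0 := (by omega); simp) (fun k hk => by simp [hx k hk])]
  refine sum_congr rfl fun j _ => ?_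
  rw [re_conj_mul_ann_eq]; push_cast; ring_nf

lemma two_mul_abs_re_conj_mul_le (u v : ℂ) :
    2 * |((starRingEnd ℂ) u * v).re| ≤ ‖u‖ ^ 2 + ‖v‖ ^ 2 := by
  have h := Complex.abs_re_le_norm ((starRingEnd ℂ) u * v)
  rw [norm_mul, RCLike.norm_conj] at h
  nlinarith [sq_nonneg (‖u‖ - ‖v‖)]

lemma cross_term_le (q : ℕ) (b : ℝ) (j : ℕ) :
    2 * b * (((j : ℝ) ^ q - ((j : ℝ) - 1) ^ q) * ((starRingEnd ℂ) (x j) * cre x j).re)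
      ≤ |b| * (q * (j : ℝ) ^ (q - 1)) * (‖x j‖ ^ 2 + ‖cre x j‖ ^ 2) := by
  rcases Nat.eq_zero_or_pos j with rfl | hj
  · simp only [cre_apply_zero, mul_zero, Complex.zero_re]; positivity
  have hj1 : (1 : ℝ) ≤ j := by exact_mod_cast hj
  have hdiff := pow_sub_pow_le_of_le (sub_nonneg.2 hj1) (sub_le_self _ zero_le_one) q
  rw [sub_sub_cancel, one_mul] at hdiff
  have hdiff₀ : 0 ≤ (j : ℝ) ^ q - ((j : ℝ) - 1) ^ q :=
    sub_nonneg.2 (pow_le_pow_left₀ (sub_nonneg.2 hj1) (sub_le_self _ zero_le_one) q)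
  have hre := two_mul_abs_re_conj_mul_le (x j) (cre x j)
  calc 2 * b * (((j : ℝ) ^ q - ((j : ℝ) - 1) ^ q) * ((starRingEnd ℂ) (x j) * cre x j).re)
      ≤ |b| * ((j : ℝ) ^ q - ((j : ℝ) - 1) ^ q)
          * (2 * |((starRingEnd ℂ) (x j) * cre x j).re|) := by
        have hbρ : b * ((starRingEnd ℂ) (x j) * cre x j).re
            ≤ |b| * |((starRingEnd ℂ) (x j) * cre x j).re| := by
          rw [← abs_mul]; exact le_abs_self _
        nlinarith
    _ ≤ |b| * (q * (j : ℝ) ^ (q - 1)) * (‖x j‖ ^ 2 + ‖cre x j‖ ^ 2) := by gcongr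

lemma two_mul_sum_cross_le {q : ℕ} (hq : q ≠ 0) (hx : ∀ j, m ≤ j + 1 → x j = 0) (b : ℝ) :
    2 * b * ∑ j ∈ range m, (j : ℝ) ^ q
        * (((starRingEnd ℂ) (x j) * cre x j).re - ((starRingEnd ℂ) (x j) * ann x j).re)
      ≤ |b| * q * ∑ k ∈ range m, ((k : ℝ) ^ (q - 1) + ((k : ℝ) + 1) ^ q) * ‖x k‖ ^ 2 := by
  have hcre := sum_mul_norm_cre_sq (fun t => (q : ℝ) * t ^ (q - 1)) hx
  have hann := sum_pow_mul_re_conj_mul_ann (m := m) q fun j hj => hx j (by omega)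
  calc _ = ∑ j ∈ range m,
          2 * b * (((j : ℝ) ^ q - ((j : ℝ) - 1) ^ q) * ((starRingEnd ℂ) (x j) * cre x j).re) := by
        simp only [mul_sub, sum_sub_distrib, hann, mul_sum, sub_mul]
    _ ≤ ∑ j ∈ range m, |b| * (q * (j : ℝ) ^ (q - 1)) * (‖x j‖ ^ 2 + ‖cre x j‖ ^ 2) :=
        sum_le_sum fun j _ => cross_term_le q b j
    _ = |b| * (∑ j ∈ range m, q * (j : ℝ) ^ (q - 1) * ‖x j‖ ^ 2
          + ∑ j ∈ range m, q * (j : ℝ) ^ (q - 1) * ‖cre x j‖ ^ 2) := by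
        simp only [mul_add, sum_add_distrib, mul_sum, mul_assoc]
    _ = _ := by
        rw [hcre, ← sum_add_distrib, mul_sum, mul_sum]
        refine sum_congr rfl fun k _ => ?_
        rw [mul_assoc (q : ℝ) (((k : ℝ) + 1) ^ (q - 1)), pow_sub_one_mul hq]
        ring

end Cross

/-- With `q = 2p`, each `A`-term pairs the shifted weight `(t ± d)^q` of one `L_k` with the matching
part `-t^q ‖α‖² (…)` of the damping in `G`; the `B`-term dominates the `β₁` cross term. -/
def lyapunovCoeff (q : ℕ) (A1 A2 A4 A5 B t : ℝ) : ℝ :=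
  A1 * t * ((t - 1) ^ q - t ^ q) + A2 * ((t + 1) * ((t + 1) ^ q - t ^ q))
    + A4 * (t * (t - 1) * ((t - 2) ^ q - t ^ q))
    + A5 * ((t + 1) * (t + 2) * ((t + 2) ^ q - t ^ q))
    + B * q * (t ^ (q - 1) + (t + 1) ^ q)

lemma eventually_lyapunovCoeff_add_le (hq : q ≠ 0) {A1 A2 A4 A5 B α : ℝ} (hA1 : 0 ≤ A1)
    (hA2 : 0 ≤ A2) (hA5 : 0 ≤ A5) (hA : A5 < A4) (hB : 0 ≤ B) (hα : 0 ≤ α) :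
    ∀ᶠ t in atTop, lyapunovCoeff q A1 A2 A4 A5 B t + α * t ^ q ≤ 0 := by
  set C := q * A2 + 8 * q * (q + 1) * A4 + 2 * q * B + α with hC_def
  filter_upwards [eventually_ge_atTop 2, eventually_ge_atTop (C / (2 * q * (A4 - A5)))]
    with t ht hC
  have ht0 : 0 ≤ t := by linarith
  have hmono (a : ℝ) (ha : 0 ≤ a) (hat : a ≤ t + 2) (n : ℕ) : a ^ n ≤ (t + 2) ^ n :=
    pow_le_pow_left₀ ha hat n
  have h1 : A1 * t * ((t - 1) ^ q - t ^ q) ≤ 0 :=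
    mul_nonpos_of_nonneg_of_nonpos (by positivity)
      (sub_nonpos.2 (pow_le_pow_left₀ (by linarith) (by linarith) q))
  have h2 : A2 * ((t + 1) * ((t + 1) ^ q - t ^ q)) ≤ A2 * (q * (t + 2) ^ q) := by
    refine mul_le_mul_of_nonneg_left ((mul_add_one_pow_sub_pow_le ht0 hq).trans ?_) hA2
    gcongr
    linarith
  have h4 := mul_le_mul_of_nonneg_left (mul_sub_two_pow_sub_pow_le ht hq) (hA5.trans hA.le)
  have h5 := mul_le_mul_of_nonneg_left (mul_add_two_pow_sub_pow_le ht0 hq) hA5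
  have hcross : t ^ (q - 1) + (t + 1) ^ q ≤ 2 * (t + 2) ^ q := by
    have := hmono t ht0 (by linarith) (q - 1)
    have := hmono (t + 1) (by linarith) (by linarith) q
    have : (t + 2) ^ (q - 1) ≤ (t + 2) ^ q := pow_le_pow_right₀ (by linarith) (Nat.sub_le q 1)
    linarith
  have hB' := mul_le_mul_of_nonneg_left hcross (by positivity : 0 ≤ B * q)
  have hα' := mul_le_mul_of_nonneg_left (hmono t ht0 (by linarith) q) hα
  have hlarge : C ≤ 2 * q * (A4 - A5) * (t + 2) := by
    rw [div_le_iff₀ (by have := sub_pos.2 hA; positivity)] at hC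
    nlinarith
  have hfinal : (t + 2) ^ q * (C - 2 * q * (A4 - A5) * (t + 2)) ≤ 0 :=
    mul_nonpos_of_nonneg_of_nonpos (by positivity) (by linarith)
  rw [hC_def] at hfinal
  rw [pow_succ] at h4 h5
  unfold lyapunovCoeff
  linarith

lemma norm_num_apply_sq (f : ℕ → ℂ) (j : ℕ) : ‖num f j‖ ^ 2 = (j : ℝ) ^ 2 * ‖f j‖ ^ 2 := by
  rw [num, norm_mul, mul_pow, Complex.norm_natCast]

lemma lyapunov_le_sum (p : ℕ) (hp : p ≠ 0) (b1 b2 b3 : ℝ) (a1 a2 a3 a4 a5 a6 : ℂ) (n : ℕ)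
    (x : ℕ → ℂ) (hx : ∀ j, n < j → x j = 0) :
    2 * (innerSeq (numPow p x) (numPow p (proj n (Gop b1 b2 b3 a1 a2 a3 a4 a5 a6 x)))).re
        + (normSq (numPow p (proj n (a1 • ann x))) + normSq (numPow p (proj n (a2 • cre x)))
          + normSq (numPow p (proj n (a3 • num x)))
          + normSq (numPow p (proj n (a4 • ann (ann x))))
          + normSq (numPow p (proj n (a5 • cre (cre x))))
          + normSq (numPow p (proj n (a6 • num (num x)))))
      ≤ ∑ k ∈ range (n + 3), lyapunovCoeff (2 * p) (‖a1‖ ^ 2) (‖a2‖ ^ 2) (‖a4‖ ^ 2) (‖a5‖ ^ 2)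
          |b1| k * ‖x k‖ ^ 2 := by
  have hG : 2 * (innerSeq (numPow p x) (numPow p (proj n (Gop b1 b2 b3 a1 a2 a3 a4 a5 a6 x)))).re
      = ∑ j ∈ range (n + 3), -((j : ℝ) ^ (2 * p) * dampingCoeff a1 a2 a3 a4 a5 a6 j) * ‖x j‖ ^ 2
        + 2 * b1 * ∑ j ∈ range (n + 3), (j : ℝ) ^ (2 * p)
          * (((starRingEnd ℂ) (x j) * cre x j).re - ((starRingEnd ℂ) (x j) * ann x j).re) := by
    rw [re_innerSeq_numPow_proj (m := n + 3) hx (by omega), mul_sum, mul_sum, ← sum_add_distrib]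
    refine sum_congr rfl fun j _ => ?_
    rw [mul_left_comm, two_re_conj_mul_Gop]
    ring
  have hcross := two_mul_sum_cross_le (q := 2 * p) (m := n + 3) (by omega)
    (fun j hj => hx j (by omega)) b1
  have hL (c : ℂ) (y : ℕ → ℂ) :=
    normSq_numPow_proj_smul_le (p := p) (n := n) (m := n + 3) (by omega) c y
  have hL1 := hL a1 (ann x)
  have hL2 := hL a2 (cre x)
  have hL3 := hL a3 (num x)
  have hL4 := hL a4 (ann (ann x))
  have hL5 := hL a5 (cre (cre x))
  have hL6 := hL a6 (num (num x))
  rw [sum_mul_norm_ann_sq (· ^ (2 * p)) fun j hj => hx j (by omega)] at hL1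
  rw [sum_mul_norm_cre_sq (· ^ (2 * p)) fun j hj => hx j (by omega)] at hL2
  rw [sum_mul_norm_ann_ann_sq (· ^ (2 * p)) fun j hj => hx j (by omega)] at hL4
  rw [sum_mul_norm_cre_cre_sq (· ^ (2 * p)) fun j hj => hx j (by omega)] at hL5
  simp only [norm_num_apply_sq] at hL3 hL6
  rw [hG]
  refine (add_le_add (add_le_add le_rfl hcross) (add_le_add (add_le_add (add_le_add
    (add_le_add (add_le_add hL1 hL2) hL3) hL4) hL5) hL6)).trans (le_of_eq ?_)
  simp only [mul_sum, ← sum_add_distrib]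
  refine sum_congr rfl fun k _ => ?_
  unfold lyapunovCoeff dampingCoeff
  push_cast
  ring

/-- the Lyapunov condition (H3.3) for `(N^p, √α N^p)` in the proof of
Theorem 8, case `|α₄| > |α₅|`. For `p ≥ 4` and every
`α ∈ (0, 4p(|α₄|² − |α₅|²))` there are `β ≥ 0` and `N₀` with
`2 Re⟨N^p x, N^p Pₙ G x⟩ + Σ_{k=1}^{6} ‖N^p Pₙ L_k x‖² ≤ −α ‖N^p x‖² + β(1 + ‖x‖²)`
for all `n ≥ N₀` and all `x ∈ h_n`. -/
theorem stmt11 (p : ℕ) (hp : 4 ≤ p) (b1 b2 b3 : ℝ) (a1 a2 a3 a4 a5 a6 : ℂ)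
    (ha : ‖a5‖ < ‖a4‖) :
    ∀ al : ℝ, 0 < al → al < 4 * p * (‖a4‖ ^ 2 - ‖a5‖ ^ 2) →
      ∃ be : ℝ, 0 ≤ be ∧ ∃ N₀ : ℕ,
        ∀ n : ℕ, N₀ ≤ n → ∀ x : ℕ → ℂ, (∀ j, n < j → x j = 0) →
          2 * (innerSeq (numPow p x)
                (numPow p (proj n (Gop b1 b2 b3 a1 a2 a3 a4 a5 a6 x)))).re
            + (normSq (numPow p (proj n (a1 • ann x)))
              + normSq (numPow p (proj n (a2 • cre x)))
              + normSq (numPow p (proj n (a3 • num x)))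
              + normSq (numPow p (proj n (a4 • ann (ann x))))
              + normSq (numPow p (proj n (a5 • cre (cre x))))
              + normSq (numPow p (proj n (a6 • num (num x)))))
            ≤ -al * normSq (numPow p x) + be * (1 + normSq x) := by
  intro al hal _
  have hev := tendsto_natCast_atTop_atTop.eventually <|
    eventually_lyapunovCoeff_add_le (q := 2 * p) (by omega) (sq_nonneg ‖a1‖) (sq_nonneg ‖a2‖)
      (sq_nonneg ‖a5‖) (pow_lt_pow_left₀ ha (norm_nonneg _) two_ne_zero) (abs_nonneg b1) hal.le
  obtain ⟨be, hbe⟩ := (isBoundedUnder_of_eventually_le hev).bddAbove_range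
  refine ⟨max be 0, le_max_right _ _, 0, fun n _ x hx =>
    (lyapunov_le_sum p (by omega) b1 b2 b3 a1 a2 a3 a4 a5 a6 n x hx).trans ?_⟩
  have hx' (j : ℕ) (hj : n + 3 ≤ j) : x j = 0 := hx j (by omega)
  rw [normSq_eq_sum (m := n + 3) fun j hj => by simp [numPow, hx' j hj],
    normSq_eq_sum (m := n + 3) hx']
  calc _ ≤ ∑ k ∈ range (n + 3), (-al * (k : ℝ) ^ (2 * p) + max be 0) * ‖x k‖ ^ 2 := by
        refine sum_le_sum fun k _ => mul_le_mul_of_nonneg_right ?_ (sq_nonneg _)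
        linarith [hbe ⟨k, rfl⟩, le_max_left be 0]
    _ = -al * ∑ k ∈ range (n + 3), ‖numPow p x k‖ ^ 2
          + max be 0 * ∑ k ∈ range (n + 3), ‖x k‖ ^ 2 := by
        simp only [numPow, norm_natCast_pow_mul_sq, add_mul, sum_add_distrib, mul_sum, mul_assoc]
    _ ≤ _ := by gcongr; linarith

end QOsc
end
end

section
/- Let h be a separable complex Hilbert space and (Ω, F, P) a probability space. Let α and α_n (n ∈ ℕ) be h-valued random variables such that E‖α_n − α‖² → 0 as n → ∞, E‖α_n‖² = E‖α‖² = 1 for every n, and P(α = 0) = 0. Define π : h → h by π(x) = x/‖x‖ for x ≠ 0 and π(0) = 0. Then for every bounded continuous function f : h → ℝ, E[‖α_n‖² f(π(α_n))] → E[‖α‖² f(π(α))] as n → ∞; that is, the probability measures B ↦ E[‖α_n‖² 1_B(π(α_n))] on the Borel σ-algebra of h converge weakly to B ↦ E[‖α‖² 1_B(π(α))]. -/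
/-!
Write `g = f ∘ π` and split `‖αₙ‖² g(αₙ) - ‖α‖² g(α)` as
`(‖αₙ‖² - ‖α‖²) g(αₙ) + ‖α‖² (g(αₙ) - g(α))`. Since `g` is bounded, the first term is controlled
by `E|‖αₙ‖² - ‖α‖²|`, which tends to zero by Cauchy–Schwarz. For the second, `L²` convergence gives
convergence in measure, so every subsequence has a further subsequence along which `αₙ → α`
almost surely; as `α ≠ 0` almost surely and `π` is continuous off `0`, dominated convergence
with dominant `M ‖α‖²` applies.
-/

open Filter MeasureTheory
open scoped Classical

/-- The normalization map `π : h → h`, `π(x) = x/‖x‖` for `x ≠ 0` and `π(0) = 0`. -/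
noncomputable def normalizeVec {H : Type*} [NormedAddCommGroup H] [InnerProductSpace ℂ H]
    (x : H) : H :=
  if x = 0 then 0 else ((‖x‖ : ℂ))⁻¹ • x

open Topology

section Normalize

variable {H : Type*} [NormedAddCommGroup H] [InnerProductSpace ℂ H]

lemma normalizeVec_eq_smul (x : H) : normalizeVec x = (‖x‖ : ℂ)⁻¹ • x := by
  by_cases hx : x = 0 <;> simp [normalizeVec, hx]

lemma continuousAt_normalizeVec {x : H} (hx : x ≠ 0) : ContinuousAt normalizeVec x := by
  simp_rw [funext normalizeVec_eq_smul]
  exact ((Complex.continuous_ofReal.comp continuous_norm).continuousAt.inv₀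
    (by simpa using hx)).smul continuousAt_id

lemma MeasureTheory.AEStronglyMeasurable.normalizeVec {Ω : Type*} [MeasurableSpace Ω]
    {μ : Measure Ω} {β : Ω → H} (hβ : AEStronglyMeasurable β μ) :
    AEStronglyMeasurable (fun ω => _root_.normalizeVec (β ω)) μ := by
  simp_rw [normalizeVec_eq_smul]
  exact (Complex.measurable_ofReal.comp_aemeasurable hβ.norm.aemeasurable).inv.aestronglyMeasurable
    |>.smul hβ

end Normalize

lemma abs_norm_sq_sub_norm_sq_le {E : Type*} [SeminormedAddCommGroup E] (a b : E) :
    |‖a‖ ^ 2 - ‖b‖ ^ 2| ≤ ‖a - b‖ ^ 2 + 2 * (‖a - b‖ * ‖b‖) := by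
  have h₁ := norm_sub_norm_le a b
  have h₂ := norm_sub_norm_le b a
  rw [norm_sub_rev] at h₂
  exact abs_le.2 ⟨by nlinarith [norm_nonneg a, norm_nonneg b],
    by nlinarith [norm_nonneg a, norm_nonneg b]⟩

section Convergence

variable {Ω : Type*} [MeasurableSpace Ω] {μ : Measure Ω}

lemma integral_mul_le_sqrt_integral_sq_mul_sqrt_integral_sq {u v : Ω → ℝ}
    (hu0 : 0 ≤ᵐ[μ] u) (hv0 : 0 ≤ᵐ[μ] v) (hu : MemLp u 2 μ) (hv : MemLp v 2 μ) :
    ∫ ω, u ω * v ω ∂μ ≤ √(∫ ω, u ω ^ 2 ∂μ) * √(∫ ω, v ω ^ 2 ∂μ) := by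
  have h := integral_mul_le_Lp_mul_Lq_of_nonneg Real.HolderConjugate.two_two hu0 hv0
    (by rwa [ENNReal.ofReal_ofNat]) (by rwa [ENNReal.ofReal_ofNat])
  simpa only [Real.rpow_two, Real.sqrt_eq_rpow] using h

variable {E : Type*} [NormedAddCommGroup E] {ι : Type*} {l : Filter ι}

lemma MeasureTheory.MemLp.eLpNorm_two_eq_ofReal_sqrt {f : Ω → E} (hf : MemLp f 2 μ) :
    eLpNorm f 2 μ = ENNReal.ofReal √(∫ ω, ‖f ω‖ ^ 2 ∂μ) := by
  rw [hf.eLpNorm_eq_integral_rpow_norm two_ne_zero ENNReal.ofNat_ne_top, ENNReal.toReal_ofNat,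
    Real.sqrt_eq_rpow, one_div]
  simp only [Real.rpow_two]

lemma tendstoInMeasure_of_tendsto_integral_norm_sub_sq {F : ι → Ω → E} {f : Ω → E}
    (hF : ∀ n, MemLp (F n) 2 μ) (hf : MemLp f 2 μ)
    (h : Tendsto (fun n => ∫ ω, ‖F n ω - f ω‖ ^ 2 ∂μ) l (𝓝 0)) :
    TendstoInMeasure μ F l f := by
  refine tendstoInMeasure_of_tendsto_eLpNorm two_ne_zero (fun n => (hF n).1) hf.1 ?_
  simp_rw [fun n => ((hF n).sub hf).eLpNorm_two_eq_ofReal_sqrt, Pi.sub_apply]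
  simpa [Function.comp_def] using (ENNReal.continuous_ofReal.tendsto _).comp h.sqrt

lemma tendsto_integral_abs_norm_sq_sub_norm_sq {F : ι → Ω → E} {f : Ω → E}
    (hF : ∀ n, MemLp (F n) 2 μ) (hf : MemLp f 2 μ)
    (h : Tendsto (fun n => ∫ ω, ‖F n ω - f ω‖ ^ 2 ∂μ) l (𝓝 0)) :
    Tendsto (fun n => ∫ ω, |‖F n ω‖ ^ 2 - ‖f ω‖ ^ 2| ∂μ) l (𝓝 0) := by
  set D := fun n => ∫ ω, ‖F n ω - f ω‖ ^ 2 ∂μ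
  have hbound : ∀ n, ∫ ω, |‖F n ω‖ ^ 2 - ‖f ω‖ ^ 2| ∂μ
      ≤ D n + 2 * (√(D n) * √(∫ ω, ‖f ω‖ ^ 2 ∂μ)) := by
    intro n
    have hd : MemLp (fun ω => ‖F n ω - f ω‖) 2 μ := ((hF n).sub hf).norm
    have hd2 : Integrable (fun ω => ‖F n ω - f ω‖ ^ 2) μ :=
      ((hF n).sub hf).integrable_norm_pow two_ne_zero
    have hdf : Integrable (fun ω => ‖F n ω - f ω‖ * ‖f ω‖) μ := hd.integrable_mul hf.norm
    calc ∫ ω, |‖F n ω‖ ^ 2 - ‖f ω‖ ^ 2| ∂μ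
        ≤ ∫ ω, ‖F n ω - f ω‖ ^ 2 + 2 * (‖F n ω - f ω‖ * ‖f ω‖) ∂μ :=
          integral_mono_of_nonneg (.of_forall fun _ => abs_nonneg _) (hd2.add (hdf.const_mul 2))
            (.of_forall fun ω => abs_norm_sq_sub_norm_sq_le (F n ω) (f ω))
      _ = D n + 2 * ∫ ω, ‖F n ω - f ω‖ * ‖f ω‖ ∂μ := by
          rw [integral_add hd2 (hdf.const_mul 2), integral_const_mul]
      _ ≤ D n + 2 * (√(D n) * √(∫ ω, ‖f ω‖ ^ 2 ∂μ)) := by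
          gcongr
          exact integral_mul_le_sqrt_integral_sq_mul_sqrt_integral_sq
            (.of_forall fun _ => norm_nonneg _) (.of_forall fun _ => norm_nonneg _) hd hf.norm
  have hlim : Tendsto (fun n => D n + 2 * (√(D n) * √(∫ ω, ‖f ω‖ ^ 2 ∂μ))) l (𝓝 0) := by
    simpa using h.add ((h.sqrt.mul_const _).const_mul 2)
  exact squeeze_zero (fun n => integral_nonneg fun _ => abs_nonneg _) hbound hlim

lemma tendsto_integral_mul_sub_integral_mul {W : ι → Ω → ℝ} {w : Ω → ℝ} {G : ι → Ω → ℝ}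
    {M : ℝ} (hW : ∀ n, Integrable (W n) μ) (hw : Integrable w μ)
    (hG : ∀ n, AEStronglyMeasurable (G n) μ) (hGM : ∀ n ω, |G n ω| ≤ M)
    (h : Tendsto (fun n => ∫ ω, |W n ω - w ω| ∂μ) l (𝓝 0)) :
    Tendsto (fun n => ∫ ω, W n ω * G n ω ∂μ - ∫ ω, w ω * G n ω ∂μ) l (𝓝 0) := by
  have hbound : ∀ n, ‖∫ ω, W n ω * G n ω ∂μ - ∫ ω, w ω * G n ω ∂μ‖
      ≤ (∫ ω, |W n ω - w ω| ∂μ) * M := by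
    intro n
    have hGM' : ∀ᵐ ω ∂μ, ‖G n ω‖ ≤ M := .of_forall (hGM n)
    rw [← integral_sub ((hW n).mul_bdd (hG n) hGM') (hw.mul_bdd (hG n) hGM'),
      ← integral_mul_const]
    refine norm_integral_le_of_norm_le (((hW n).sub hw).abs.mul_const M) (.of_forall fun ω => ?_)
    rw [← sub_mul, norm_mul, Real.norm_eq_abs, Real.norm_eq_abs]
    exact mul_le_mul_of_nonneg_left (hGM n ω) (abs_nonneg _)
  exact squeeze_zero_norm hbound (by simpa using h.mul_const M)

lemma tendsto_integral_mul_comp_of_tendstoInMeasure {X : Type*} [PseudoMetricSpace X]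
    {F : ℕ → Ω → X} {f : Ω → X} {w : Ω → ℝ} {g : X → ℝ} {M : ℝ}
    (hF : TendstoInMeasure μ F atTop f) (hw : Integrable w μ)
    (hgF : ∀ n, AEStronglyMeasurable (fun ω => g (F n ω)) μ) (hgM : ∀ x, |g x| ≤ M)
    (hg : ∀ᵐ ω ∂μ, ContinuousAt g (f ω)) :
    Tendsto (fun n => ∫ ω, w ω * g (F n ω) ∂μ) atTop (𝓝 (∫ ω, w ω * g (f ω) ∂μ)) := by
  refine tendsto_of_subseq_tendsto fun ns hns => ?_
  obtain ⟨ms, -, hae⟩ := (hF.comp hns).exists_seq_tendsto_ae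
  refine ⟨ms, tendsto_integral_of_dominated_convergence (fun ω => |w ω| * M)
    (fun _ => hw.1.mul (hgF _)) (hw.abs.mul_const M) (fun _ => .of_forall fun ω => ?_) ?_⟩
  · rw [norm_mul, Real.norm_eq_abs, Real.norm_eq_abs]
    exact mul_le_mul_of_nonneg_left (hgM _) (abs_nonneg _)
  · filter_upwards [hae, hg] with ω hω hgω
    exact (hgω.tendsto.comp hω).const_mul (w ω)

end Convergence

theorem stmt13_general {H : Type*} [NormedAddCommGroup H] [InnerProductSpace ℂ H]
    {Ω : Type*} [MeasurableSpace Ω] (P : Measure Ω)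
    (α : Ω → H) (αs : ℕ → Ω → H)
    (hα2 : MemLp α 2 P) (hαs2 : ∀ n, MemLp (αs n) 2 P)
    (hconv : Tendsto (fun n => ∫ ω, ‖αs n ω - α ω‖ ^ 2 ∂P) atTop (nhds 0))
    (hzero : P {ω | α ω = 0} = 0) :
    ∀ f : H → ℝ, Continuous f → (∃ M : ℝ, ∀ x : H, |f x| ≤ M) →
      Tendsto (fun n => ∫ ω, ‖αs n ω‖ ^ 2 * f (normalizeVec (αs n ω)) ∂P) atTop
        (nhds (∫ ω, ‖α ω‖ ^ 2 * f (normalizeVec (α ω)) ∂P)) := by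
  rintro f hf ⟨M, hM⟩
  have hsq : ∀ {β : Ω → H}, MemLp β 2 P → Integrable (fun ω => ‖β ω‖ ^ 2) P :=
    fun hβ => hβ.integrable_norm_pow two_ne_zero
  have hmeas : ∀ n, AEStronglyMeasurable (fun ω => f (normalizeVec (αs n ω))) P :=
    fun n => hf.comp_aestronglyMeasurable (hαs2 n).1.normalizeVec
  have hcont : ∀ᵐ ω ∂P, ContinuousAt (fun x => f (normalizeVec x)) (α ω) := by
    filter_upwards [measure_eq_zero_iff_ae_notMem.1 hzero] with ω hω
    exact hf.continuousAt.comp (continuousAt_normalizeVec hω)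
  have hA := tendsto_integral_mul_sub_integral_mul (fun n => hsq (hαs2 n)) (hsq hα2) hmeas
    (fun n ω => hM _) (tendsto_integral_abs_norm_sq_sub_norm_sq hαs2 hα2 hconv)
  have hB := tendsto_integral_mul_comp_of_tendstoInMeasure (g := fun x => f (normalizeVec x))
    (tendstoInMeasure_of_tendsto_integral_norm_sub_sq hαs2 hα2 hconv) (hsq hα2) hmeas
    (fun x => hM _) hcont
  simpa using hA.add hB

/-- analytic core of the proof of Theorem 6. If `αₙ → α` in `L²`, all with
`E‖·‖² = 1`, and `P(α = 0) = 0`, then for every bounded continuous `f : h → ℝ` we have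
`E[‖αₙ‖² f(π(αₙ))] → E[‖α‖² f(π(α))]`; i.e. the reweighted laws of `π(αₙ)` converge weakly
to the reweighted law of `π(α)`. -/
theorem stmt13 {H : Type*} [NormedAddCommGroup H] [InnerProductSpace ℂ H]
    [CompleteSpace H] [TopologicalSpace.SeparableSpace H]
    {Ω : Type*} [MeasurableSpace Ω] (P : Measure Ω) [IsProbabilityMeasure P]
    (α : Ω → H) (αs : ℕ → Ω → H)
    (hα2 : MemLp α 2 P) (hαs2 : ∀ n, MemLp (αs n) 2 P)
    (hconv : Tendsto (fun n => ∫ ω, ‖αs n ω - α ω‖ ^ 2 ∂P) atTop (nhds 0))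
    (hnorm : ∀ n, ∫ ω, ‖αs n ω‖ ^ 2 ∂P = 1)
    (hnorm' : ∫ ω, ‖α ω‖ ^ 2 ∂P = 1)
    (hzero : P {ω | α ω = 0} = 0) :
    ∀ f : H → ℝ, Continuous f → (∃ M : ℝ, ∀ x : H, |f x| ≤ M) →
      Tendsto (fun n => ∫ ω, ‖αs n ω‖ ^ 2 * f (normalizeVec (αs n ω)) ∂P) atTop
        (nhds (∫ ω, ‖α ω‖ ^ 2 * f (normalizeVec (α ω)) ∂P)) :=
  stmt13_general P α αs hα2 hαs2 hconv hzero
end
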